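/- Let X₁, …, X_Z and U₁, …, U_Z be random variables on a probability space (Ω, P) such that the pairs (X_k, U_k), k = 1, …, Z, are independent and identically distributed, where X_k takes values in {1, …, N} with P(X₁ = n) = p_n, U_k takes values in a measurable space E, and X₁ is independent of U₁. Let C₁, …, C_N ⊆ E be measurable sets with P(U₁ ∈ C_n) = s_n. Then the expected cardinality of the set {n ∈ {1, …, N} : ∃ k ∈ {1, …, Z}, X_k = n and U_k ∉ C_n} equals Σ_{n=1}^{N} (1 − (1 − p_n · (1 − s_n))^Z). -/

import Mathlib

open MeasureTheory ProbabilityTheory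
open scoped ENNReal

/-! The number of contents requested from outside their cache region is `∑ n, 𝟙[Aₙ]`, where
`Aₙ` is the event that some user `k` has `(X k, U k) ∈ {n} ×ˢ (C n)ᶜ`, so its expectation is
`∑ n, P Aₙ`. By independence of `X₁` and `U₁` each single user lands in `{n} ×ˢ (C n)ᶜ` with
probability `pₙ (1 - sₙ)`, and by independence of the users the complement of `Aₙ` has
probability `(1 - pₙ (1 - sₙ)) ^ Z`. -/

section

variable {Ω : Type*} [MeasurableSpace Ω]

theorem lintegral_ncard_setOf_mem {ι : Type*} [Fintype ι] (μ : Measure Ω) {A : ι → Set Ω}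
    (hA : ∀ i, MeasurableSet (A i)) :
    ∫⁻ ω, ({i | ω ∈ A i}.ncard : ℝ≥0∞) ∂μ = ∑ i, μ (A i) := by
  classical
  have hcard : ∀ ω, ({i | ω ∈ A i}.ncard : ℝ≥0∞) = ∑ i, (A i).indicator 1 ω := by
    intro ω
    simp [Set.indicator_apply, Finset.sum_boole, Set.ncard_eq_toFinset_card']
  simp_rw [hcard]
  rw [lintegral_finsetSum _ fun i _ => measurable_one.indicator (hA i)]
  simp_rw [lintegral_indicator_one (hA _)]

theorem iIndepFun.measure_iUnion_preimage_eq_one_sub_pow {ι β : Type*} [Fintype ι]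
    [MeasurableSpace β] {μ : Measure Ω} [IsProbabilityMeasure μ] {Y : ι → Ω → β}
    (hY : iIndepFun Y μ) (hYm : ∀ i, Measurable (Y i)) {D : Set β} (hD : MeasurableSet D)
    {q : ℝ≥0∞} (hq : ∀ i, μ (Y i ⁻¹' D) = q) :
    μ (⋃ i, Y i ⁻¹' D) = 1 - (1 - q) ^ Fintype.card ι := by
  have hcompl : μ (⋃ i, Y i ⁻¹' D)ᶜ = (1 - q) ^ Fintype.card ι := by
    simp_rw [Set.compl_iUnion, ← Set.preimage_compl]
    calc μ (⋂ i, Y i ⁻¹' Dᶜ) = ∏ i, μ (Y i ⁻¹' Dᶜ) := by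
          simpa using hY.measure_inter_preimage_eq_mul Finset.univ fun _ _ => hD.compl
      _ = ∏ _ : ι, (1 - q) := by
          congr with i
          rw [Set.preimage_compl, prob_compl_eq_one_sub (hYm i hD), hq]
      _ = (1 - q) ^ Fintype.card ι := by rw [Finset.prod_const, Finset.card_univ]
  rw [← hcompl, prob_compl_eq_one_sub (.iUnion fun i => hYm i hD),
    ENNReal.sub_sub_cancel ENNReal.one_ne_top prob_le_one]

end

/-- Each of Z users independently requests content X_k (with P(X₁ = n) = p_n) and
has a location U_k (with X₁ independent of U₁, the pairs being i.i.d.); C_n is the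
region where content n is accessible from a cache, with P(U₁ ∈ C_n) = s_n. Then
the expected number of contents n requested at least once by a user outside C_n
equals Σ_{n=1}^{N} (1 − (1 − p_n (1 − s_n))^Z). -/
theorem expected_distinct_uncached_requests
    {Ω E : Type*} [MeasurableSpace Ω] [MeasurableSpace E]
    (P : Measure Ω) [IsProbabilityMeasure P]
    (Z : ℕ) (hZ : 0 < Z) (N : ℕ)
    (X : Fin Z → Ω → Fin N) (U : Fin Z → Ω → E)
    (hXmeas : ∀ k, Measurable (X k)) (hUmeas : ∀ k, Measurable (U k))
    (hindep : iIndepFun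
      (fun k ω => (X k ω, U k ω)) P)
    (hident : ∀ k, IdentDistrib (fun ω => (X k ω, U k ω))
      (fun ω => (X ⟨0, hZ⟩ ω, U ⟨0, hZ⟩ ω)) P P)
    (hXU : IndepFun (X ⟨0, hZ⟩) (U ⟨0, hZ⟩) P)
    (C : Fin N → Set E) (hC : ∀ n, MeasurableSet (C n))
    (p s : Fin N → ℝ≥0∞)
    (hp : ∀ n, P {ω | X ⟨0, hZ⟩ ω = n} = p n)
    (hs : ∀ n, P (U ⟨0, hZ⟩ ⁻¹' C n) = s n) :
    ∫⁻ ω, (({n : Fin N | ∃ k, X k ω = n ∧ U k ω ∉ C n}.ncard : ℝ≥0∞)) ∂P =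
      ∑ n, (1 - (1 - p n * (1 - s n)) ^ Z) := by
  set Y : Fin Z → Ω → Fin N × E := fun k ω => (X k ω, U k ω)
  have hYm : ∀ k, Measurable (Y k) := fun k => (hXmeas k).prodMk (hUmeas k)
  have hD : ∀ n, MeasurableSet ({n} ×ˢ (C n)ᶜ) :=
    fun n => (measurableSet_singleton n).prod (hC n).compl
  have hq : ∀ n k, P (Y k ⁻¹' ({n} ×ˢ (C n)ᶜ)) = p n * (1 - s n) := by
    intro n k
    rw [(hident k).measure_mem_eq (hD n), Set.mk_preimage_prod,
      hXU.measure_inter_preimage_eq_mul _ _ (measurableSet_singleton n) (hC n).compl,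
      Set.preimage_compl, prob_compl_eq_one_sub (hUmeas _ (hC n)), hs, ← hp]
    rfl
  have hset : ∀ ω, {n | ∃ k, X k ω = n ∧ U k ω ∉ C n} =
      {n | ω ∈ ⋃ k, Y k ⁻¹' ({n} ×ˢ (C n)ᶜ)} := by
    intro ω
    ext n
    simp [Y]
  simp_rw [hset]
  rw [lintegral_ncard_setOf_mem P fun n => .iUnion fun k => hYm k (hD n)]
  refine Finset.sum_congr rfl fun n _ => ?_
  rw [iIndepFun.measure_iUnion_preimage_eq_one_sub_pow hindep hYm (hD n) (hq n), Fintype.card_fin]
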